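/- arXiv:math/0404239 — 2 statements merged into one kernel-verified Lean document; each statement's English description precedes it below -/
import Mathlib

section
/- Let A₁ ⊆ B₁ and A₂ ⊆ B₂ be finite graphs with A₁ ≤*_s B₁, A₂ ≤*_s B₂ (both relations strict or not), A₁ ⊆ A₂, B₁ ⊆ B₂ (induced subgraphs), and B₂ \ A₂ = B₁ \ A₁ as sets of vertices. Then ξ(A₁,B₁) ≥ ξ(A₂,B₂). Moreover, equality holds if and only if there is no edge of B₂ between a vertex of A₂ \ A₁ and a vertex of B₁ \ A₁. -/
namespace ZeroOneLaw

variable {V : Type*}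

/-- `r` is an equivalence relation on the set `s` (and relates only elements of `s`). -/
def IsEquivOn (r : V → V → Prop) (s : Set V) : Prop :=
  (∀ x ∈ s, r x x) ∧ (∀ ⦃x y⦄, r x y → r y x) ∧
    (∀ ⦃x y z⦄, r x y → r y z → r x z) ∧ (∀ ⦃x y⦄, r x y → x ∈ s ∧ y ∈ s)

/-- `C` is `r`-closed (a union of `r`-classes). -/
def RClosed (r : V → V → Prop) (C : Set V) : Prop :=
  ∀ ⦃x y⦄, x ∈ C → r x y → y ∈ C

/-- The restriction of the relation `r` to the set `C`. -/
def restrict (r : V → V → Prop) (C : Set V) : V → V → Prop :=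
  fun x y => r x y ∧ x ∈ C ∧ y ∈ C

/-- The number of equivalence classes of `r`, i.e. `v_λ(A,B)` when `r` is an
equivalence relation on `B \ A`. -/
noncomputable def numClasses (r : V → V → Prop) : ℕ :=
  Nat.card {t : Set V // ∃ x, r x x ∧ t = {y | r x y}}

/-- An edge of `B` that is neither contained in `A` nor contained in a single `r`-class:
these are the edges counted by `e_λ(A,B)`. -/
def BadEdge (G : SimpleGraph V) (A B : Set V) (r : V → V → Prop) (e : Sym2 V) : Prop :=
  e ∈ G.edgeSet ∧ (∀ v ∈ e, v ∈ B) ∧ ¬ (∀ v ∈ e, v ∈ A) ∧ ¬ ∃ x, ∀ v ∈ e, r x v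

/-- `e_λ(A,B)`. -/
noncomputable def numEdges (G : SimpleGraph V) (A B : Set V) (r : V → V → Prop) : ℕ :=
  Nat.card {e : Sym2 V // BadEdge G A B r e}

/-- The weight `w_λ(A,B) = v_λ(A,B) - α · e_λ(A,B)`. -/
noncomputable def weight (G : SimpleGraph V) (α : ℝ) (A B : Set V) (r : V → V → Prop) : ℝ :=
  (numClasses r : ℝ) - α * (numEdges G A B r : ℝ)

/-- `A <*_c B`. -/
def Ltc (G : SimpleGraph V) (α : ℝ) (A B : Set V) : Prop :=
  A ⊂ B ∧ ∀ r : V → V → Prop, IsEquivOn r (B \ A) → weight G α A B r < 0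

/-- `A ≤*_i B`. -/
def Lei (G : SimpleGraph V) (α : ℝ) (A B : Set V) : Prop :=
  A ⊆ B ∧ ∀ A' : Set V, A ⊆ A' → A' ⊂ B → Ltc G α A' B

/-- `A <*_i B`. -/
def Lti (G : SimpleGraph V) (α : ℝ) (A B : Set V) : Prop :=
  Lei G α A B ∧ A ≠ B

/-- `A ≤*_s B`. -/
def Les (G : SimpleGraph V) (α : ℝ) (A B : Set V) : Prop :=
  A ⊆ B ∧ ¬ ∃ A' : Set V, Lti G α A A' ∧ A' ⊆ B

/-- `A <*_s B`. -/
def Lts (G : SimpleGraph V) (α : ℝ) (A B : Set V) : Prop :=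
  Les G α A B ∧ A ≠ B

/-- `A <*_pr B`. -/
def Ltpr (G : SimpleGraph V) (α : ℝ) (A B : Set V) : Prop :=
  Lts G α A B ∧ ¬ ∃ C : Set V, Lts G α A C ∧ Lts G α C B

/-- `Ξ(A,B)`: the set of equivalence relations `λ` on `B \ A` such that every nonempty
`λ`-closed `C ⊆ B \ A` has `w_λ(A, A ∪ C) > 0`. -/
def Xi (G : SimpleGraph V) (α : ℝ) (A B : Set V) : Set (V → V → Prop) :=
  {r | IsEquivOn r (B \ A) ∧
    ∀ C ⊆ B \ A, C.Nonempty → RClosed r C → 0 < weight G α A (A ∪ C) (restrict r C)}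

/-- `ξ(A,B) = max {w_λ(A,B) : λ ∈ Ξ(A,B)}`. -/
noncomputable def xi (G : SimpleGraph V) (α : ℝ) (A B : Set V) : ℝ :=
  sSup {w : ℝ | ∃ r ∈ Xi G α A B, w = weight G α A B r}

/-! ### Auxiliary definitions -/

/-- The set of equivalence classes of `r`. -/
def classSet (r : V → V → Prop) : Set (Set V) := {t : Set V | ∃ x, r x x ∧ t = {y | r x y}}

/-- The union of two relations. -/
def orRel (u s : V → V → Prop) : V → V → Prop := fun x y => u x y ∨ s x y

/-- Edges inside `A ∪ S` with a vertex in `S` and a vertex in `T` (think `T ⊆ A`). -/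
def crossSet (G : SimpleGraph V) (A S T : Set V) : Set (Sym2 V) :=
  {e | e ∈ G.edgeSet ∧ (∀ v ∈ e, v ∈ A ∪ S) ∧ (∃ v ∈ e, v ∈ S) ∧ ∃ v ∈ e, v ∈ T}

/-! ### Basic lemmas -/

lemma numClasses_eq_ncard (r : V → V → Prop) : numClasses r = (classSet r).ncard := rfl

lemma numEdges_eq_ncard (G : SimpleGraph V) (A B : Set V) (r : V → V → Prop) :
    numEdges G A B r = {e | BadEdge G A B r e}.ncard := rfl

lemma weight_congr {G : SimpleGraph V} {α : ℝ} {A B : Set V} {r r' : V → V → Prop}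
    (h : ∀ x y, r x y ↔ r' x y) : weight G α A B r = weight G α A B r' := by
  have : r = r' := by funext x y; exact propext (h x y)
  rw [this]

lemma restrict_iff {r : V → V → Prop} {D : Set V} (h : IsEquivOn r D) :
    ∀ x y, restrict r D x y ↔ r x y :=
  fun _ _ => ⟨fun h' => h'.1, fun h' => ⟨h', h.2.2.2 h'⟩⟩

lemma isEquivOn_restrict {r : V → V → Prop} {D C : Set V}
    (h : IsEquivOn r D) (hC : C ⊆ D) : IsEquivOn (restrict r C) C := by
  refine ⟨fun x hx => ⟨h.1 x (hC hx), hx, hx⟩, ?_, ?_, ?_⟩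
  · rintro x y ⟨hr, hx, hy⟩; exact ⟨h.2.1 hr, hy, hx⟩
  · rintro x y z ⟨hr, hx, hy⟩ ⟨hr', _, hz⟩; exact ⟨h.2.2.1 hr hr', hx, hz⟩
  · rintro x y ⟨_, hx, hy⟩; exact ⟨hx, hy⟩

lemma isEquivOn_orRel {u s : V → V → Prop} {C₁ C₂ : Set V}
    (hu : IsEquivOn u C₁) (hs : IsEquivOn s C₂) (hd : Disjoint C₁ C₂) :
    IsEquivOn (orRel u s) (C₁ ∪ C₂) := by
  obtain ⟨hur, hus, hut, hum⟩ := hu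
  obtain ⟨hsr, hss, hst, hsm⟩ := hs
  have hdis : ∀ x, x ∈ C₁ → x ∈ C₂ → False := fun x h1 h2 => Set.disjoint_left.1 hd h1 h2
  refine ⟨?_, ?_, ?_, ?_⟩
  · rintro x (hx | hx)
    · exact Or.inl (hur x hx)
    · exact Or.inr (hsr x hx)
  · rintro x y (h | h)
    · exact Or.inl (hus h)
    · exact Or.inr (hss h)
  · rintro x y z (h1 | h1) (h2 | h2)
    · exact Or.inl (hut h1 h2)
    · exact absurd (hum h1).2 (fun hy => hdis y hy (hsm h2).1)
    · exact absurd (hsm h1).2 (fun hy => hdis y (hum h2).1 hy)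
    · exact Or.inr (hst h1 h2)
  · rintro x y (h | h)
    · exact ⟨Or.inl (hum h).1, Or.inl (hum h).2⟩
    · exact ⟨Or.inr (hsm h).1, Or.inr (hsm h).2⟩

lemma classSet_orRel {u s : V → V → Prop} {C₁ C₂ : Set V}
    (hu : IsEquivOn u C₁) (hs : IsEquivOn s C₂) (hd : Disjoint C₁ C₂) :
    classSet (orRel u s) = classSet u ∪ classSet s := by
  have hdis : ∀ x, x ∈ C₁ → x ∈ C₂ → False := fun x h1 h2 => Set.disjoint_left.1 hd h1 h2
  ext t
  constructor
  · rintro ⟨x, hxx | hxx, rfl⟩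
    · refine Or.inl ⟨x, hxx, ?_⟩
      ext y
      simp only [Set.mem_setOf_eq, orRel]
      exact ⟨fun h => h.elim id (fun h' => absurd (hu.2.2.2 hxx).1
        (fun hh => hdis x hh (hs.2.2.2 h').1)), Or.inl⟩
    · refine Or.inr ⟨x, hxx, ?_⟩
      ext y
      simp only [Set.mem_setOf_eq, orRel]
      exact ⟨fun h => h.elim (fun h' => absurd (hs.2.2.2 hxx).1
        (fun hh => hdis x (hu.2.2.2 h').1 hh)) id, Or.inr⟩
  · rintro (⟨x, hxx, rfl⟩ | ⟨x, hxx, rfl⟩)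
    · refine ⟨x, Or.inl hxx, ?_⟩
      ext y
      simp only [Set.mem_setOf_eq, orRel]
      exact ⟨Or.inl, fun h => h.elim id (fun h' => absurd (hu.2.2.2 hxx).1
        (fun hh => hdis x hh (hs.2.2.2 h').1))⟩
    · refine ⟨x, Or.inr hxx, ?_⟩
      ext y
      simp only [Set.mem_setOf_eq, orRel]
      exact ⟨Or.inr, fun h => h.elim (fun h' => absurd (hs.2.2.2 hxx).1
        (fun hh => hdis x (hu.2.2.2 h').1 hh)) id⟩

lemma numClasses_orRel [Fintype V] {u s : V → V → Prop} {C₁ C₂ : Set V}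
    (hu : IsEquivOn u C₁) (hs : IsEquivOn s C₂) (hd : Disjoint C₁ C₂) :
    numClasses (orRel u s) = numClasses u + numClasses s := by
  rw [numClasses_eq_ncard, numClasses_eq_ncard, numClasses_eq_ncard,
    classSet_orRel hu hs hd]
  refine Set.ncard_union_eq ?_ (Set.toFinite _) (Set.toFinite _)
  rw [Set.disjoint_left]
  rintro t ⟨x, hxx, rfl⟩ ⟨x', hxx', ht⟩
  have hx1 : x ∈ {y | u x y} := hxx
  rw [ht] at hx1
  exact Set.disjoint_left.1 hd (hu.2.2.2 hxx).1 (hs.2.2.2 hx1).2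

lemma numClasses_pos [Fintype V] {r : V → V → Prop} {C : Set V}
    (h : IsEquivOn r C) (hC : C.Nonempty) : 0 < numClasses r := by
  obtain ⟨x, hx⟩ := hC
  rw [numClasses_eq_ncard]
  exact Set.ncard_pos (Set.toFinite _) |>.2 ⟨{y | r x y}, x, h.1 x hx, rfl⟩

lemma weight_ne_zero {G : SimpleGraph V} {α : ℝ} {A B : Set V} {r : V → V → Prop}
    (hirr : Irrational α) (hc : 0 < numClasses r) : weight G α A B r ≠ 0 := by
  intro h
  unfold weight at h
  by_cases he : numEdges G A B r = 0
  · rw [he] at h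
    simp at h
    omega
  · apply hirr
    refine ⟨(numClasses r : ℚ) / (numEdges G A B r : ℚ), ?_⟩
    push_cast
    rw [div_eq_iff (by exact_mod_cast he)]
    linarith

lemma weight_zero_of_empty [Fintype V] {G : SimpleGraph V} {α : ℝ} {A B : Set V}
    {r : V → V → Prop} (hE : IsEquivOn r ∅) (hBA : B ⊆ A) : weight G α A B r = 0 := by
  have h1 : numClasses r = 0 := by
    rw [numClasses_eq_ncard]
    convert Set.ncard_empty (Set V)
    ext t
    simp only [Set.mem_empty_iff_false, iff_false, classSet, Set.mem_setOf_eq]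
    rintro ⟨x, hxx, _⟩
    exact (hE.2.2.2 hxx).1
  have h2 : numEdges G A B r = 0 := by
    rw [numEdges_eq_ncard]
    convert Set.ncard_empty (Sym2 V)
    ext e
    simp only [Set.mem_empty_iff_false, iff_false, Set.mem_setOf_eq]
    rintro ⟨_, hB, hnA, _⟩
    exact hnA fun v hv => hBA (hB v hv)
  simp [weight, h1, h2]

lemma weightSet_finite [Fintype V] (G : SimpleGraph V) (α : ℝ) (A B : Set V)
    (P : (V → V → Prop) → Prop) :
    {w : ℝ | ∃ r, P r ∧ w = weight G α A B r}.Finite := by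
  apply Set.Finite.subset (Set.Finite.image2 (fun (c : ℕ) (e : ℕ) => (c : ℝ) - α * e)
    (Set.finite_Iic (Nat.card (Set V))) (Set.finite_Iic (Nat.card (Sym2 V))))
  rintro w ⟨r, _, rfl⟩
  exact Set.mem_image2_of_mem (Nat.card_le_card_of_injective _ Subtype.val_injective)
    (Nat.card_le_card_of_injective _ Subtype.val_injective)

/-! ### Decomposition of the bad-edge sets -/

lemma badEdge_vert {G : SimpleGraph V} {A C₁ C₂ : Set V} {u s : V → V → Prop}
    (hu : ∀ ⦃x y⦄, u x y → x ∈ C₁ ∧ y ∈ C₁) (hs : ∀ ⦃x y⦄, s x y → x ∈ C₂ ∧ y ∈ C₂)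
    (hd2 : ∀ x ∈ C₂, x ∉ A ∪ C₁) :
    {e | BadEdge G A (A ∪ C₁ ∪ C₂) (orRel u s) e} =
      {e | BadEdge G A (A ∪ C₁) u e} ∪ {e | BadEdge G (A ∪ C₁) (A ∪ C₁ ∪ C₂) s e} := by
  ext e
  constructor
  · rintro ⟨hedge, hB, hnA, hncl⟩
    by_cases hcase : ∀ v ∈ e, v ∈ A ∪ C₁
    · refine Or.inl ⟨hedge, hcase, hnA, ?_⟩
      rintro ⟨z, hz⟩
      exact hncl ⟨z, fun v hv => Or.inl (hz v hv)⟩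
    · refine Or.inr ⟨hedge, hB, hcase, ?_⟩
      rintro ⟨z, hz⟩
      exact hncl ⟨z, fun v hv => Or.inr (hz v hv)⟩
  · rintro (⟨hedge, hB, hnA, hncl⟩ | ⟨hedge, hB, hnA, hncl⟩)
    · refine ⟨hedge, fun v hv => Or.inl (hB v hv), hnA, ?_⟩
      rintro ⟨z, hz⟩
      refine hncl ⟨z, fun v hv => ?_⟩
      rcases hz v hv with h | h
      · exact h
      · exact absurd (hB v hv) (hd2 v (hs h).2)
    · push_neg at hnA
      obtain ⟨v₀, hv₀e, hv₀⟩ := hnA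
      refine ⟨hedge, hB, fun h => hv₀ (Or.inl (h v₀ hv₀e)), ?_⟩
      rintro ⟨z, hz⟩
      have hz0 : s z v₀ := by
        rcases hz v₀ hv₀e with h | h
        · exact absurd (Or.inr (hu h).2) hv₀
        · exact h
      refine hncl ⟨z, fun v hv => ?_⟩
      rcases hz v hv with h | h
      · exact absurd (Or.inr (hu h).1) (hd2 z (hs hz0).1)
      · exact h

lemma badEdge_vert_disj {G : SimpleGraph V} {A C₁ C₂ : Set V} {u s : V → V → Prop} :
    Disjoint {e | BadEdge G A (A ∪ C₁) u e} {e | BadEdge G (A ∪ C₁) (A ∪ C₁ ∪ C₂) s e} := by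
  rw [Set.disjoint_left]
  rintro e ⟨_, hB, _, _⟩ ⟨_, _, hnA, _⟩
  exact hnA hB

lemma weight_vert [Fintype V] {G : SimpleGraph V} {α : ℝ} {A C₁ C₂ : Set V} {u s : V → V → Prop}
    (hu : IsEquivOn u C₁) (hs : IsEquivOn s C₂) (hd2 : ∀ x ∈ C₂, x ∉ A ∪ C₁) :
    weight G α A (A ∪ C₁ ∪ C₂) (orRel u s) =
      weight G α A (A ∪ C₁) u + weight G α (A ∪ C₁) (A ∪ C₁ ∪ C₂) s := by
  have hd : Disjoint C₁ C₂ := Set.disjoint_left.2 fun {x} hx1 hx2 => hd2 x hx2 (Or.inr hx1)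
  have hcls := numClasses_orRel hu hs hd
  have hedg : numEdges G A (A ∪ C₁ ∪ C₂) (orRel u s)
      = numEdges G A (A ∪ C₁) u + numEdges G (A ∪ C₁) (A ∪ C₁ ∪ C₂) s := by
    rw [numEdges_eq_ncard, numEdges_eq_ncard, numEdges_eq_ncard,
      badEdge_vert hu.2.2.2 hs.2.2.2 hd2,
      Set.ncard_union_eq badEdge_vert_disj (Set.toFinite _) (Set.toFinite _)]
  unfold weight
  rw [hcls, hedg]
  push_cast
  ring

lemma badEdge_horiz {G : SimpleGraph V} {A₁ A₂ C : Set V} {u : V → V → Prop}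
    (hA : A₁ ⊆ A₂) (hCA : ∀ x ∈ C, x ∉ A₂) (hu : ∀ ⦃x y⦄, u x y → x ∈ C ∧ y ∈ C) :
    {e | BadEdge G A₂ (A₂ ∪ C) u e} =
      {e | BadEdge G A₁ (A₁ ∪ C) u e} ∪ crossSet G A₂ C (A₂ \ A₁) := by
  ext e
  constructor
  · rintro ⟨hedge, hB, hnA, hncl⟩
    by_cases hcase : ∀ w ∈ e, w ∈ A₁ ∪ C
    · refine Or.inl ⟨hedge, hcase, ?_, hncl⟩
      intro hall
      push_neg at hnA
      obtain ⟨v, hve, hv⟩ := hnA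
      rcases hcase v hve with h | h
      · exact hv (hA h)
      · exact hv (absurd (hall v hve) (fun ha => hCA v h (hA ha)))
    · push_neg at hcase
      obtain ⟨w, hwe, hw⟩ := hcase
      push_neg at hnA
      obtain ⟨v, hve, hv⟩ := hnA
      have hvC : v ∈ C := (hB v hve).resolve_left hv
      have hw2 : w ∈ A₂ := by
        rcases hB w hwe with h | h
        · exact h
        · exact absurd (Or.inr h) hw
      exact Or.inr ⟨hedge, hB, ⟨v, hve, hvC⟩, ⟨w, hwe, hw2, fun h1 => hw (Or.inl h1)⟩⟩
  · rintro (⟨hedge, hB, hnA, hncl⟩ | ⟨hedge, hB, ⟨v, hve, hv⟩, ⟨w, hwe, hw⟩⟩)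
    · refine ⟨hedge, fun v hv => ?_, fun hall => ?_, hncl⟩
      · rcases hB v hv with h | h
        · exact Or.inl (hA h)
        · exact Or.inr h
      · refine hnA fun v hv => ?_
        rcases hB v hv with h | h
        · exact h
        · exact absurd (hall v hv) (hCA v h)
    · refine ⟨hedge, hB, fun hall => hCA v hv (hall v hve), ?_⟩
      rintro ⟨z, hz⟩
      exact hCA w (hu (hz w hwe)).2 hw.1

lemma badEdge_horiz_disj {G : SimpleGraph V} {A₁ A₂ C : Set V} {u : V → V → Prop}
    (hCA : ∀ x ∈ C, x ∉ A₂) :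
    Disjoint {e | BadEdge G A₁ (A₁ ∪ C) u e} (crossSet G A₂ C (A₂ \ A₁)) := by
  rw [Set.disjoint_left]
  rintro e ⟨_, hB, _, _⟩ ⟨_, _, _, ⟨w, hwe, hw2, hw1⟩⟩
  rcases hB w hwe with h | h
  · exact hw1 h
  · exact hCA w h hw2

lemma weight_horiz [Fintype V] {G : SimpleGraph V} {α : ℝ} {A₁ A₂ C : Set V} {u : V → V → Prop}
    (hA : A₁ ⊆ A₂) (hCA : ∀ x ∈ C, x ∉ A₂) (hu : ∀ ⦃x y⦄, u x y → x ∈ C ∧ y ∈ C) :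
    weight G α A₂ (A₂ ∪ C) u =
      weight G α A₁ (A₁ ∪ C) u - α * ((crossSet G A₂ C (A₂ \ A₁)).ncard : ℝ) := by
  have hedg : numEdges G A₂ (A₂ ∪ C) u
      = numEdges G A₁ (A₁ ∪ C) u + (crossSet G A₂ C (A₂ \ A₁)).ncard := by
    rw [numEdges_eq_ncard, numEdges_eq_ncard, badEdge_horiz hA hCA hu,
      Set.ncard_union_eq (badEdge_horiz_disj hCA) (Set.toFinite _) (Set.toFinite _)]
  unfold weight
  rw [hedg]
  push_cast
  ring

lemma crossSet_empty {G : SimpleGraph V} {A₂ C D : Set V} (hCD : C ⊆ D)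
    (hCA : ∀ x ∈ C, x ∉ A₂) {A₁ : Set V}
    (hne : ¬ ∃ x ∈ A₂ \ A₁, ∃ y ∈ D, G.Adj x y) :
    crossSet G A₂ C (A₂ \ A₁) = ∅ := by
  ext e
  simp only [Set.mem_empty_iff_false, iff_false]
  rintro ⟨hedge, hB, ⟨v, hve, hv⟩, ⟨w, hwe, hw⟩⟩
  have hvw : v ≠ w := fun h => hCA v hv (h ▸ hw.1)
  have heq : e = s(v, w) := ((Sym2.mem_and_mem_iff hvw).1 ⟨hve, hwe⟩)
  rw [heq, SimpleGraph.mem_edgeSet] at hedge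
  exact hne ⟨w, hw, v, hCD hv, hedge.symm⟩

lemma crossSet_nonempty {G : SimpleGraph V} {A₂ D : Set V} {A₁ : Set V}
    (hex : ∃ x ∈ A₂ \ A₁, ∃ y ∈ D, G.Adj x y) (hDA : ∀ x ∈ D, x ∉ A₂) :
    (crossSet G A₂ D (A₂ \ A₁)).Nonempty := by
  obtain ⟨x, hx, y, hy, hadj⟩ := hex
  refine ⟨s(y, x), hadj.symm, ?_, ⟨y, Sym2.mem_mk_left _ _, hy⟩,
    ⟨x, Sym2.mem_mk_right _ _, hx⟩⟩
  intro v hv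
  rcases Sym2.mem_iff.1 hv with rfl | rfl
  · exact Or.inr hy
  · exact Or.inl hx.1

/-! ### The key lemma: `A ≤*_s B` with `B \ A` nonempty implies `Ξ(A,B) ≠ ∅`. -/

lemma xi_nonempty [Fintype V] {G : SimpleGraph V} {α : ℝ}
    (hirr : Irrational α) {A B : Set V}
    (hles : Les G α A B) (hne : (B \ A).Nonempty) : (Xi G α A B).Nonempty := by
  set D := B \ A with hDdef
  have hDA : ∀ x ∈ D, x ∉ A := fun x hx => hx.2
  have hDB : D ⊆ B := Set.diff_subset
  by_cases hP : ∃ C : Set V,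
      (C.Nonempty ∧ C ⊆ D ∧ ∀ u, IsEquivOn u C → weight G α A (A ∪ C) u < 0)
  · exfalso
    set S : Set ℕ := {n : ℕ | ∃ C : Set V, (C.Nonempty ∧ C ⊆ D ∧
        ∀ u, IsEquivOn u C → weight G α A (A ∪ C) u < 0) ∧ C.ncard = n} with hSdef
    have hSne : S.Nonempty := by
      obtain ⟨C, hC⟩ := hP; exact ⟨C.ncard, C, hC, rfl⟩
    obtain ⟨C, ⟨hCne, hCD, hCw⟩, hCcard⟩ := Nat.sInf_mem hSne
    have hmin : ∀ C' : Set V, C'.Nonempty → C' ⊂ C →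
        ¬ ∀ u, IsEquivOn u C' → weight G α A (A ∪ C') u < 0 := by
      intro C' hne' hsub hw
      have h1 : C'.ncard < C.ncard := Set.ncard_lt_ncard hsub (Set.toFinite _)
      have h2 : sInf S ≤ C'.ncard :=
        Nat.sInf_le ⟨C', ⟨hne', hsub.subset.trans hCD, hw⟩, rfl⟩
      omega
    have hCA : ∀ x ∈ C, x ∉ A := fun x hx => hDA x (hCD hx)
    apply hles.2
    refine ⟨A ∪ C, ⟨⟨Set.subset_union_left, ?_⟩, ?_⟩, Set.union_subset hles.1 (hCD.trans hDB)⟩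
    · intro A'' hA'' hsub
      refine ⟨hsub, ?_⟩
      intro s hsE
      set C₁ := A'' \ A with hC₁def
      have hA''eq : A'' = A ∪ C₁ := (Set.union_diff_cancel hA'').symm
      have hC₁C : C₁ ⊆ C := by
        intro x hx
        rcases hsub.subset hx.1 with h | h
        · exact absurd h hx.2
        · exact h
      have hdiffEq : (A ∪ C) \ A'' = C \ C₁ := by
        ext x
        constructor
        · rintro ⟨hx1, hx2⟩
          rcases hx1 with h | h
          · exact absurd (hA'' h) hx2
          · exact ⟨h, fun h' => hx2 h'.1⟩
        · rintro ⟨hx1, hx2⟩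
          refine ⟨Or.inr hx1, fun h' => hx2 ⟨h', hCA x hx1⟩⟩
      rw [hdiffEq] at hsE
      by_cases hC₁ : C₁.Nonempty
      · have hne'' := hmin C₁ hC₁ ⟨hC₁C, fun h => hsub.ne (by rw [hA''eq, hC₁C.antisymm h])⟩
        push_neg at hne''
        obtain ⟨u, huE, huw⟩ := hne''
        have hupos : 0 < weight G α A (A ∪ C₁) u :=
          lt_of_le_of_ne huw (Ne.symm (weight_ne_zero hirr (numClasses_pos huE hC₁)))
        have hd2 : ∀ x ∈ C \ C₁, x ∉ A ∪ C₁ := by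
          rintro x ⟨hx1, hx2⟩ (h | h)
          · exact hCA x hx1 h
          · exact hx2 h
        have hsE' : IsEquivOn s (C \ C₁) := hsE
        have hadd := weight_vert (G := G) (α := α) huE hsE' hd2
        have hCC : C₁ ∪ (C \ C₁) = C := Set.union_diff_cancel hC₁C
        have hunion : A ∪ C₁ ∪ (C \ C₁) = A ∪ C := by rw [Set.union_assoc, hCC]
        rw [hunion] at hadd
        have hcw := hCw (orRel u s) (by
          have := isEquivOn_orRel huE hsE' (Set.disjoint_left.2 fun {x} h1 h2 => h2.2 h1)
          rwa [hCC] at this)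
        rw [hA''eq]
        linarith
      · have hC₁e : C₁ = ∅ := Set.not_nonempty_iff_eq_empty.1 hC₁
        have hA''A : A'' = A := by rw [hA''eq, hC₁e, Set.union_empty]
        rw [hC₁e, Set.diff_empty] at hsE
        rw [hA''A]
        exact hCw s hsE
    · obtain ⟨x, hx⟩ := hCne
      intro h
      have hxA : x ∈ A := by rw [h]; exact Or.inr hx
      exact hCA x hx hxA
  · push_neg at hP
    set W : Set ℝ := {w : ℝ | ∃ r, IsEquivOn r D ∧ w = weight G α A B r} with hWdef
    have hWfin : W.Finite := weightSet_finite G α A B _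
    have hWne : W.Nonempty := by
      refine ⟨_, fun x y => x = y ∧ x ∈ D, ⟨fun x hx => ⟨rfl, hx⟩, ?_, ?_, ?_⟩, rfl⟩
      · rintro x y ⟨rfl, h⟩; exact ⟨rfl, h⟩
      · rintro x y z ⟨rfl, h⟩ ⟨rfl, _⟩; exact ⟨rfl, h⟩
      · rintro x y ⟨rfl, h⟩; exact ⟨h, h⟩
    obtain ⟨r, hrE, hrw⟩ := hWne.csSup_mem hWfin
    refine ⟨r, hrE, ?_⟩
    intro C hCD hCne hcl
    by_contra hle
    push_neg at hle
    have hres : IsEquivOn (restrict r C) C := isEquivOn_restrict hrE hCD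
    have hlt : weight G α A (A ∪ C) (restrict r C) < 0 :=
      lt_of_le_of_ne hle (weight_ne_zero hirr (numClasses_pos hres hCne))
    obtain ⟨u, huE, huw⟩ := hP C hCne hCD
    have hupos : 0 < weight G α A (A ∪ C) u :=
      lt_of_le_of_ne huw (Ne.symm (weight_ne_zero hirr (numClasses_pos huE hCne)))
    have hDC : IsEquivOn (restrict r (D \ C)) (D \ C) :=
      isEquivOn_restrict hrE Set.diff_subset
    have hd2 : ∀ x ∈ D \ C, x ∉ A ∪ C := by
      rintro x ⟨hx1, hx2⟩ (h | h)
      · exact hDA x hx1 h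
      · exact hx2 h
    have hCC : C ∪ (D \ C) = D := Set.union_diff_cancel hCD
    have hAD : A ∪ D = B := Set.union_diff_cancel hles.1
    have hunion : A ∪ C ∪ (D \ C) = B := by rw [Set.union_assoc, hCC, hAD]
    have hdecomp : ∀ x y, r x y ↔ orRel (restrict r C) (restrict r (D \ C)) x y := by
      intro x y
      constructor
      · intro h
        have hx := (hrE.2.2.2 h).1
        have hy := (hrE.2.2.2 h).2
        by_cases hxC : x ∈ C
        · exact Or.inl ⟨h, hxC, hcl hxC h⟩
        · exact Or.inr ⟨h, ⟨hx, hxC⟩, ⟨hy, fun hyC => hxC (hcl hyC (hrE.2.1 h))⟩⟩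
      · rintro (⟨h, _⟩ | ⟨h, _⟩) <;> exact h
    have h1 := weight_vert (G := G) (α := α) hres hDC hd2
    rw [hunion] at h1
    have h2 : weight G α A B r = weight G α A (A ∪ C) (restrict r C) +
        weight G α (A ∪ C) B (restrict r (D \ C)) := by
      rw [weight_congr hdecomp]; exact h1
    have h3 := weight_vert (G := G) (α := α) huE hDC hd2
    rw [hunion] at h3
    have hmem : weight G α A B (orRel u (restrict r (D \ C))) ∈ W := by
      refine ⟨orRel u (restrict r (D \ C)), ?_, rfl⟩
      have := isEquivOn_orRel huE hDC (Set.disjoint_left.2 fun {x} h1' h2' => h2'.2 h1')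
      rwa [hCC] at this
    have hle2 := le_csSup hWfin.bddAbove hmem
    rw [hrw] at hle2
    linarith

theorem stmt11 {V : Type*} [Fintype V] (G : SimpleGraph V) (α : ℝ)
    (hirr : Irrational α) (h0 : 0 < α) (h1 : α < 1)
    (A₁ B₁ A₂ B₂ : Set V)
    (hs1 : Les G α A₁ B₁) (hs2 : Les G α A₂ B₂)
    (hA : A₁ ⊆ A₂) (hB : B₁ ⊆ B₂) (hdiff : B₂ \ A₂ = B₁ \ A₁) :
    xi G α A₂ B₂ ≤ xi G α A₁ B₁ ∧
      (xi G α A₁ B₁ = xi G α A₂ B₂ ↔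
        ¬ ∃ x ∈ A₂ \ A₁, ∃ y ∈ B₁ \ A₁, G.Adj x y) := by
  classical
  have hDA₂ : ∀ x ∈ B₁ \ A₁, x ∉ A₂ := by
    intro x hx
    rw [← hdiff] at hx
    exact hx.2
  have hB₂eq : A₂ ∪ (B₁ \ A₁) = B₂ := by rw [← hdiff]; exact Set.union_diff_cancel hs2.1
  have hB₁eq : A₁ ∪ (B₁ \ A₁) = B₁ := Set.union_diff_cancel hs1.1
  set S₁ : Set ℝ := {w : ℝ | ∃ r ∈ Xi G α A₁ B₁, w = weight G α A₁ B₁ r} with hS₁def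
  set S₂ : Set ℝ := {w : ℝ | ∃ r ∈ Xi G α A₂ B₂, w = weight G α A₂ B₂ r} with hS₂def
  have hxi1 : xi G α A₁ B₁ = sSup S₁ := rfl
  have hxi2 : xi G α A₂ B₂ = sSup S₂ := rfl
  have hfin₁ : S₁.Finite := weightSet_finite G α A₁ B₁ _
  have hfin₂ : S₂.Finite := weightSet_finite G α A₂ B₂ _
  have F2 : ∀ r : V → V → Prop, IsEquivOn r (B₁ \ A₁) →
      weight G α A₂ B₂ r = weight G α A₁ B₁ r
        - α * ((crossSet G A₂ (B₁ \ A₁) (A₂ \ A₁)).ncard : ℝ) := by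
    intro r hr
    have h := weight_horiz (G := G) (α := α) hA hDA₂ hr.2.2.2
    rwa [hB₂eq, hB₁eq] at h
  have F1 : Xi G α A₂ B₂ ⊆ Xi G α A₁ B₁ := by
    rintro r ⟨hrE, hrC⟩
    rw [hdiff] at hrE
    refine ⟨hrE, ?_⟩
    intro C hCD hCne hcl
    have h2 := hrC C (by rw [hdiff]; exact hCD) hCne hcl
    have hCA₂ : ∀ x ∈ C, x ∉ A₂ := fun x hx => hDA₂ x (hCD hx)
    have hw := weight_horiz (G := G) (α := α) (u := restrict r C) hA hCA₂ (fun x y h => h.2)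
    have hcn : (0:ℝ) ≤ α * ((crossSet G A₂ C (A₂ \ A₁)).ncard : ℝ) := by positivity
    linarith
  have F4 : ∀ r ∈ Xi G α A₁ B₁, (B₁ \ A₁).Nonempty → 0 < weight G α A₁ B₁ r := by
    rintro r ⟨hrE, hrC⟩ hDne
    have h := hrC (B₁ \ A₁) Set.Subset.rfl hDne (fun x y _ hr => (hrE.2.2.2 hr).2)
    rw [hB₁eq, weight_congr (restrict_iff hrE)] at h
    exact h
  have partA : sSup S₂ ≤ sSup S₁ := by
    by_cases hS₂ : S₂.Nonempty
    · obtain ⟨r₀, hr₀, hw₀⟩ := hS₂.csSup_mem hfin₂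
      have hr₀E : IsEquivOn r₀ (B₁ \ A₁) := by
        have h := hr₀.1; rwa [hdiff] at h
      have h1 := F2 r₀ hr₀E
      have h3 := le_csSup hfin₁.bddAbove (⟨r₀, F1 hr₀, rfl⟩ :
        weight G α A₁ B₁ r₀ ∈ S₁)
      have hcn : (0:ℝ) ≤ α * ((crossSet G A₂ (B₁ \ A₁) (A₂ \ A₁)).ncard : ℝ) := by positivity
      rw [hw₀]
      linarith
    · rw [Set.not_nonempty_iff_eq_empty.1 hS₂, Real.sSup_empty]
      by_cases hS₁ : S₁.Nonempty
      · obtain ⟨r₀, hr₀, hw₀⟩ := hS₁.csSup_mem hfin₁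
        rw [hw₀]
        by_cases hDne : (B₁ \ A₁).Nonempty
        · exact (F4 r₀ hr₀ hDne).le
        · have hD0 : B₁ \ A₁ = ∅ := Set.not_nonempty_iff_eq_empty.1 hDne
          have hBA : B₁ ⊆ A₁ := Set.diff_eq_empty.1 hD0
          have hrE : IsEquivOn r₀ (∅ : Set V) := by
            have h := hr₀.1; rwa [hD0] at h
          exact (weight_zero_of_empty hrE hBA).ge
      · rw [Set.not_nonempty_iff_eq_empty.1 hS₁, Real.sSup_empty]
  refine ⟨partA, ?_, ?_⟩
  · intro heq
    intro hex
    obtain ⟨x, hx, y, hy, hadj⟩ := hex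
    have hDne : (B₁ \ A₁).Nonempty := ⟨y, hy⟩
    have hXi₂ne : (Xi G α A₂ B₂).Nonempty :=
      xi_nonempty hirr hs2 (by rw [hdiff]; exact hDne)
    obtain ⟨r, hr⟩ := hXi₂ne
    have hS₂ne : S₂.Nonempty := ⟨_, r, hr, rfl⟩
    obtain ⟨r₀, hr₀, hw₀⟩ := hS₂ne.csSup_mem hfin₂
    have hr₀E : IsEquivOn r₀ (B₁ \ A₁) := by
      have h := hr₀.1; rwa [hdiff] at h
    have hEpos : 0 < (crossSet G A₂ (B₁ \ A₁) (A₂ \ A₁)).ncard :=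
      Set.ncard_pos (Set.toFinite _) |>.2 (crossSet_nonempty ⟨x, hx, y, hy, hadj⟩ hDA₂)
    have h1 := F2 r₀ hr₀E
    have h3 := le_csSup hfin₁.bddAbove (⟨r₀, F1 hr₀, rfl⟩ :
      weight G α A₁ B₁ r₀ ∈ S₁)
    have h4 : (0:ℝ) < α * ((crossSet G A₂ (B₁ \ A₁) (A₂ \ A₁)).ncard : ℝ) := by
      apply mul_pos h0
      exact_mod_cast hEpos
    rw [hxi1, hxi2] at heq
    rw [hw₀] at heq
    linarith
  · intro hne
    have hcross : ∀ C ⊆ B₁ \ A₁, crossSet G A₂ C (A₂ \ A₁) = ∅ := fun C hC =>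
      crossSet_empty hC (fun x hx => hDA₂ x (hC hx)) hne
    have hXieq : Xi G α A₁ B₁ = Xi G α A₂ B₂ := by
      apply Set.Subset.antisymm _ F1
      rintro r ⟨hrE, hrC⟩
      refine ⟨by rw [hdiff]; exact hrE, ?_⟩
      intro C hCD hCne hcl
      rw [hdiff] at hCD
      have h2 := hrC C hCD hCne hcl
      have hw := weight_horiz (G := G) (α := α) (u := restrict r C) hA
        (fun x hx => hDA₂ x (hCD hx)) (fun x y h => h.2)
      rw [hcross C hCD, Set.ncard_empty] at hw
      simp only [Nat.cast_zero, mul_zero, sub_zero] at hw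
      rw [hw]
      exact h2
    have hE0 : crossSet G A₂ (B₁ \ A₁) (A₂ \ A₁) = ∅ := hcross _ Set.Subset.rfl
    have hSeq : S₁ = S₂ := by
      ext w
      constructor
      · rintro ⟨r, hr, rfl⟩
        have hrE : IsEquivOn r (B₁ \ A₁) := hr.1
        refine ⟨r, hXieq ▸ hr, ?_⟩
        rw [F2 r hrE, hE0, Set.ncard_empty]
        simp
      · rintro ⟨r, hr, rfl⟩
        have hr' : r ∈ Xi G α A₁ B₁ := hXieq ▸ hr
        have hrE : IsEquivOn r (B₁ \ A₁) := hr'.1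
        refine ⟨r, hr', ?_⟩
        rw [F2 r hrE, hE0, Set.ncard_empty]
        simp
    rw [hxi1, hxi2, hSeq]

end ZeroOneLaw
end

section
/- Suppose A <*_pr B (A ≤*_s B, A ≠ B, and there is no C with A <*_s C <*_s B) and a ∈ B \ A. Then the induced subgraph on A ∪ {a} satisfies A∪{a} ≤*_i B. -/
namespace ZeroOneLaw

variable {V : Type*}

private lemma class_eq {r : V → V → Prop} (hsymm : ∀ ⦃x y⦄, r x y → r y x)
    (htrans : ∀ ⦃x y z⦄, r x y → r y z → r x z) {x y : V} (h : r x y) :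
    {z | r x z} = {z | r y z} := by
  ext z
  exact ⟨fun hz => htrans (hsymm h) hz, fun hz => htrans h hz⟩

private lemma isEquivOn_restrict_s15 {r : V → V → Prop} {s t : Set V} (hr : IsEquivOn r s)
    (hts : t ⊆ s) : IsEquivOn (restrict r t) t :=
  ⟨fun x hx => ⟨hr.1 x (hts hx), hx, hx⟩,
   fun _ _ h => ⟨hr.2.1 h.1, h.2.2, h.2.1⟩,
   fun _ _ _ h h' => ⟨hr.2.2.1 h.1 h'.1, h.2.1, h'.2.2⟩,
   fun _ _ h => ⟨h.2.1, h.2.2⟩⟩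

private lemma numClasses_le [Finite V] {r : V → V → Prop} {s t u : Set V}
    (hr : IsEquivOn r s) (hts : t ⊆ s)
    (hu : ∀ x ∈ s, (¬ ∃ z ∈ t, r z x) → x ∈ u) :
    numClasses r ≤ numClasses (restrict r t) + numClasses (restrict r u) := by
  classical
  obtain ⟨hrefl, hsymm, htrans, hdom⟩ := hr
  rw [numClasses, numClasses, numClasses, ← Nat.card_sum]
  have gkey : ∀ {P : V → V → Prop} (d : {c : Set V // ∃ x, P x x ∧ c = {y | P x y}})
      (z : V), z ∈ d.1 → P d.2.choose z := by
    intro P d z hz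
    have h2 := d.2.choose_spec.2
    rw [h2] at hz
    exact hz
  set g : {c : Set V // ∃ x, restrict r t x x ∧ c = {y | restrict r t x y}} ⊕
      {c : Set V // ∃ x, restrict r u x x ∧ c = {y | restrict r u x y}} →
      {c : Set V // ∃ x, r x x ∧ c = {y | r x y}} :=
    Sum.elim (fun d => ⟨{y | r d.2.choose y}, d.2.choose, d.2.choose_spec.1.1, rfl⟩)
      (fun d => ⟨{y | r d.2.choose y}, d.2.choose, d.2.choose_spec.1.1, rfl⟩) with hg
  apply Nat.card_le_card_of_surjective g
  rintro ⟨c, hc⟩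
  obtain ⟨x, hxx, rfl⟩ := hc
  by_cases hex : ∃ z ∈ t, r x z
  · obtain ⟨z, hzt, hxz⟩ := hex
    have hzz : restrict r t z z := ⟨hrefl z (hts hzt), hzt, hzt⟩
    set d : {c : Set V // ∃ x, restrict r t x x ∧ c = {y | restrict r t x y}} :=
      ⟨{y | restrict r t z y}, z, hzz, rfl⟩ with hd
    refine ⟨Sum.inl d, ?_⟩
    have hwz : restrict r t d.2.choose z := gkey d z hzz
    apply Subtype.ext
    show {y | r d.2.choose y} = {y | r x y}
    rw [class_eq hsymm htrans hwz.1, class_eq hsymm htrans hxz]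
  · have hxu : x ∈ u := hu x (hdom hxx).1 (fun ⟨z, hzt, hzx⟩ => hex ⟨z, hzt, hsymm hzx⟩)
    have hxx' : restrict r u x x := ⟨hxx, hxu, hxu⟩
    set d : {c : Set V // ∃ x, restrict r u x x ∧ c = {y | restrict r u x y}} :=
      ⟨{y | restrict r u x y}, x, hxx', rfl⟩ with hd
    refine ⟨Sum.inr d, ?_⟩
    have hwx : restrict r u d.2.choose x := gkey d x hxx'
    apply Subtype.ext
    show {y | r d.2.choose y} = {y | r x y}
    rw [class_eq hsymm htrans hwx.1]

private lemma numEdges_le [Finite V] (G : SimpleGraph V) {r : V → V → Prop} {C Z Y B : Set V}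
    (hr : IsEquivOn r (B \ C)) (hCZ : C ⊆ Z) (hZY : Z ⊆ Y) (hYB : Y ⊆ B)
    (hhull : ∀ z x, z ∈ Z \ C → r z x → x ∈ Y)
    (hY2 : ∀ x ∈ Y, x ∉ Z → ∃ z ∈ Z \ C, r z x) :
    numEdges G C Z (restrict r (Z \ C)) + numEdges G Y B (restrict r (B \ Y)) ≤
      numEdges G C B r := by
  classical
  obtain ⟨hrefl, hsymm, htrans, hdom⟩ := hr
  have p₁ : ∀ e, BadEdge G C Z (restrict r (Z \ C)) e → BadEdge G C B r e := by
    intro e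
    induction e using Sym2.ind with
    | _ u w =>
      rintro ⟨he, hZ, hC, hcls⟩
      refine ⟨he, fun v hv => hYB (hZY (hZ v hv)), hC, ?_⟩
      rintro ⟨x, hx⟩
      have hu : r x u := hx u (Sym2.mem_mk_left u w)
      have hw : r x w := hx w (Sym2.mem_mk_right u w)
      have huZC : u ∈ Z \ C := ⟨hZ u (Sym2.mem_mk_left u w), (hdom hu).2.2⟩
      have hwZC : w ∈ Z \ C := ⟨hZ w (Sym2.mem_mk_right u w), (hdom hw).2.2⟩
      refine hcls ⟨u, fun v hv => ?_⟩
      rcases Sym2.mem_iff.1 hv with rfl | rfl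
      · exact ⟨hrefl v (hdom hu).2, huZC, huZC⟩
      · exact ⟨htrans (hsymm hu) hw, huZC, hwZC⟩
  have p₂ : ∀ e, BadEdge G Y B (restrict r (B \ Y)) e → BadEdge G C B r e := by
    intro e
    induction e using Sym2.ind with
    | _ u w =>
      rintro ⟨he, hB, hY, hcls⟩
      refine ⟨he, hB, fun hc => hY (fun v hv => hZY (hCZ (hc v hv))), ?_⟩
      rintro ⟨x, hx⟩
      have hu : r x u := hx u (Sym2.mem_mk_left u w)
      have hw : r x w := hx w (Sym2.mem_mk_right u w)
      have ruw : r u w := htrans (hsymm hu) hw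
      have key : ∀ a b : V, r a b → a ∉ Y → b ∉ Y := by
        intro a b hab haY hbY
        by_cases hbZ : b ∈ Z
        · exact haY (hhull b a ⟨hbZ, (hdom hab).2.2⟩ (hsymm hab))
        · obtain ⟨z, hz, hzb⟩ := hY2 b hbY hbZ
          exact haY (hhull z a hz (htrans hzb (hsymm hab)))
      have hor : u ∉ Y ∨ w ∉ Y := by
        by_contra h
        push_neg at h
        refine hY (fun v hv => ?_)
        rcases Sym2.mem_iff.1 hv with rfl | rfl
        exacts [h.1, h.2]
      have huw : u ∉ Y ∧ w ∉ Y := by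
        rcases hor with h | h
        · exact ⟨h, key u w ruw h⟩
        · exact ⟨key w u (hsymm ruw) h, h⟩
      have huBY : u ∈ B \ Y := ⟨hB u (Sym2.mem_mk_left u w), huw.1⟩
      have hwBY : w ∈ B \ Y := ⟨hB w (Sym2.mem_mk_right u w), huw.2⟩
      refine hcls ⟨u, fun v hv => ?_⟩
      rcases Sym2.mem_iff.1 hv with rfl | rfl
      · exact ⟨hrefl v (hdom hu).2, huBY, huBY⟩
      · exact ⟨ruw, huBY, hwBY⟩
  rw [numEdges, numEdges, numEdges, ← Nat.card_sum]
  set f : {e : Sym2 V // BadEdge G C Z (restrict r (Z \ C)) e} ⊕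
      {e : Sym2 V // BadEdge G Y B (restrict r (B \ Y)) e} →
      {e : Sym2 V // BadEdge G C B r e} :=
    Sum.elim (fun d => ⟨d.1, p₁ d.1 d.2⟩) (fun d => ⟨d.1, p₂ d.1 d.2⟩) with hf
  apply Nat.card_le_card_of_injective f
  rintro (⟨e₁, h₁⟩ | ⟨e₁, h₁⟩) (⟨e₂, h₂⟩ | ⟨e₂, h₂⟩) hab <;>
    simp only [hf, Sum.elim_inl, Sum.elim_inr, Subtype.mk.injEq] at hab
  · simp [hab]
  · exact absurd (fun v hv => hZY (h₁.2.1 v (by rwa [hab]))) h₂.2.2.1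
  · exact absurd (fun v hv => hZY (h₂.2.1 v (by rwa [← hab]))) h₁.2.2.1
  · simp [hab]

private lemma main_ltc [Fintype V] (G : SimpleGraph V) (α : ℝ) (h0 : 0 < α)
    (A B : Set V) (hstep : ∀ C : Set V, A ⊂ C → C ⊂ B → ∃ Z, Lti G α C Z ∧ Z ⊆ B) :
    ∀ (n : ℕ) (C : Set V), (B \ C).ncard ≤ n → A ⊂ C → C ⊂ B → Ltc G α C B := by
  intro n
  induction n with
  | zero =>
    intro C hcard hAC hCB
    obtain ⟨x, hxB, hxC⟩ := Set.exists_of_ssubset hCB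
    have : 0 < (B \ C).ncard := (Set.ncard_pos (B \ C).toFinite).2 ⟨x, hxB, hxC⟩
    omega
  | succ n ih =>
    intro C hcard hAC hCB
    obtain ⟨Z, ⟨hLei, hne⟩, hZB⟩ := hstep C hAC hCB
    have hCZ : C ⊆ Z := hLei.1
    have hCZs : C ⊂ Z := hCZ.ssubset_of_ne hne
    by_cases hZeqB : Z = B
    · exact hZeqB ▸ hLei.2 C subset_rfl (hZeqB ▸ hCZs)
    refine ⟨hCB, fun r hr => ?_⟩
    have hrefl := hr.1
    have hsymm := hr.2.1
    have htrans := hr.2.2.1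
    have hdom := hr.2.2.2
    set Y : Set V := Z ∪ {x | ∃ z ∈ Z \ C, r z x} with hYdef
    have hZY : Z ⊆ Y := Set.subset_union_left
    have hYB : Y ⊆ B := by
      refine Set.union_subset hZB ?_
      rintro x ⟨z, hz, hzx⟩
      exact (hdom hzx).2.1
    have hhull : ∀ z x, z ∈ Z \ C → r z x → x ∈ Y := fun z x hz hzx =>
      Or.inr ⟨z, hz, hzx⟩
    have hY2 : ∀ x ∈ Y, x ∉ Z → ∃ z ∈ Z \ C, r z x := by
      rintro x (hx | hx) hxZ
      · exact absurd hx hxZ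
      · exact hx
    have hCY : C ⊆ Y := hCZ.trans hZY
    have hr₁ : IsEquivOn (restrict r (Z \ C)) (Z \ C) :=
      isEquivOn_restrict_s15 hr (Set.diff_subset_diff_left hZB)
    have hr₂ : IsEquivOn (restrict r (B \ Y)) (B \ Y) :=
      isEquivOn_restrict_s15 hr (Set.diff_subset_diff_right hCY)
    have hw₁ : weight G α C Z (restrict r (Z \ C)) < 0 :=
      (hLei.2 C subset_rfl hCZs).2 _ hr₁
    have hw₂ : weight G α Y B (restrict r (B \ Y)) ≤ 0 := by
      by_cases hYeqB : Y = B
      · have hcls : numClasses (restrict r (B \ Y)) = 0 := by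
          have : IsEmpty {c : Set V // ∃ x, restrict r (B \ Y) x x ∧
              c = {y | restrict r (B \ Y) x y}} := by
            refine ⟨fun c => ?_⟩
            obtain ⟨x, hxx, -⟩ := c.2
            exact hxx.2.1.2 (hYeqB ▸ hxx.2.1.1)
          rw [numClasses, Nat.card_of_isEmpty]
        have hedg : numEdges G Y B (restrict r (B \ Y)) = 0 := by
          have : IsEmpty {e : Sym2 V // BadEdge G Y B (restrict r (B \ Y)) e} := by
            refine ⟨fun e => ?_⟩
            obtain ⟨-, hB', hY', -⟩ := e.2
            exact hY' (fun v hv => hYeqB ▸ hB' v hv)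
          rw [numEdges, Nat.card_of_isEmpty]
        simp [weight, hcls, hedg]
      · have hCneY : C ⊂ Y := hCZs.trans_subset hZY
        have hAY : A ⊂ Y := hAC.trans hCneY
        have hYBs : Y ⊂ B := hYB.ssubset_of_ne hYeqB
        have hcardY : (B \ Y).ncard ≤ n := by
          have hlt : (B \ Y).ncard < (B \ C).ncard := by
            refine Set.ncard_lt_ncard ?_ (B \ C).toFinite
            refine ⟨Set.diff_subset_diff_right hCY, fun hsub => ?_⟩
            obtain ⟨z, hzZ, hzC⟩ := Set.exists_of_ssubset hCZs
            exact (hsub ⟨hZB hzZ, hzC⟩).2 (hZY hzZ)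
          omega
        exact le_of_lt ((ih Y hcardY hAY hYBs).2 _ hr₂)
    have hc : numClasses r ≤
        numClasses (restrict r (Z \ C)) + numClasses (restrict r (B \ Y)) := by
      refine numClasses_le hr (Set.diff_subset_diff_left hZB) ?_
      rintro x hx hnz
      refine ⟨hx.1, fun hxY => ?_⟩
      rcases hxY with hxZ | hxh
      · exact hnz ⟨x, ⟨hxZ, hx.2⟩, hrefl x hx⟩
      · exact hnz hxh
    have he : numEdges G C Z (restrict r (Z \ C)) + numEdges G Y B (restrict r (B \ Y)) ≤
        numEdges G C B r := numEdges_le G hr hCZ hZY hYB hhull hY2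
    have hcast : α * ((numEdges G C Z (restrict r (Z \ C)) : ℝ) +
        (numEdges G Y B (restrict r (B \ Y)) : ℝ)) ≤ α * (numEdges G C B r : ℝ) := by
      refine mul_le_mul_of_nonneg_left ?_ h0.le
      exact_mod_cast he
    have hc' : (numClasses r : ℝ) ≤ (numClasses (restrict r (Z \ C)) : ℝ) +
        (numClasses (restrict r (B \ Y)) : ℝ) := by exact_mod_cast hc
    simp only [weight] at hw₁ hw₂ ⊢
    nlinarith [hw₁, hw₂, hcast, hc']

theorem stmt15 {V : Type*} [Fintype V] (G : SimpleGraph V) (α : ℝ)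
    (hirr : Irrational α) (h0 : 0 < α) (h1 : α < 1)
    (A B : Set V) (hpr : Ltpr G α A B) (a : V) (ha : a ∈ B \ A) :
    Lei G α (insert a A) B := by
  obtain ⟨⟨⟨hAB, hnoi⟩, hAneB⟩, hnopr⟩ := hpr
  have hstep : ∀ C : Set V, A ⊂ C → C ⊂ B → ∃ Z, Lti G α C Z ∧ Z ⊆ B := by
    intro C hAC hCB
    have hLesAC : Les G α A C :=
      ⟨hAC.subset, fun ⟨Z, h1', h2'⟩ => hnoi ⟨Z, h1', h2'.trans hCB.subset⟩⟩
    have hnLes : ¬ Les G α C B :=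
      fun h => hnopr ⟨C, ⟨hLesAC, hAC.ne⟩, ⟨h, hCB.ne⟩⟩
    by_contra hcon
    push_neg at hcon
    exact hnLes ⟨hCB.subset, fun ⟨Z, h1', h2'⟩ => hcon Z h1' h2'⟩
  refine ⟨Set.insert_subset ha.1 hAB, fun A' hsub hA'B => ?_⟩
  have hAA' : A ⊂ A' :=
    ⟨(Set.subset_insert a A).trans hsub,
     fun hs => ha.2 (hs (hsub (Set.mem_insert a A)))⟩
  exact main_ltc G α h0 A B hstep (B \ A').ncard A' le_rfl hAA' hA'B

end ZeroOneLaw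
end
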